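/- Let μ̃ be the bilinear skew-symmetric map on ℝ^7 with nonzero basis brackets [e1,e2]=(√930/124)e4, [e1,e3]=(√31/31)e6, [e1,e4]=(√341/62)e3+(√62/62)e5, [e1,e5]=(√682/124)e6, [e1,e6]=(√341/62)e7, [e2,e3]=(√1302/124)e7, [e2,e4]=(√1302/124)e6. Then μ̃ satisfies the Jacobi identity, D = diag(1,2,4,3,4,5,6) is a derivation of (ℝ^7,μ̃), and m(μ̃) = -(107/124)·Id + (25/124)·D; in particular m(μ̃) = diag(-41/62,-57/124,-7/124,-8/31,-7/124,9/62,43/124). -/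

import Mathlib

open Finset

noncomputable section

/-- `ℝ⁷` with its standard basis and standard inner product. -/
abbrev V7 : Type := Fin 7 → ℝ

/-- The standard basis vector `e i`. -/
def e (i : Fin 7) : V7 := Pi.single i 1

/-- The standard inner product on `ℝ⁷`. -/
def dot (x y : V7) : ℝ := ∑ i, x i * y i

/-- Structure constants built from a list of entries `(i, j, k, a)`, each meaning that
`μ (e i) (e j)` has component `a` along `e k` (and `μ (e j) (e i)` has component `-a`);
all unlisted basis brackets are `0`. -/
def toC (L : List (Fin 7 × Fin 7 × Fin 7 × ℝ)) (i j k : Fin 7) : ℝ :=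
  (L.map fun t =>
      (if t.1 = i ∧ t.2.1 = j ∧ t.2.2.1 = k then t.2.2.2 else 0)
    - (if t.1 = j ∧ t.2.1 = i ∧ t.2.2.1 = k then t.2.2.2 else 0)).sum

/-- The bilinear skew-symmetric map on `ℝ⁷` with structure constants `c`. -/
def br (c : Fin 7 → Fin 7 → Fin 7 → ℝ) (x y : V7) : V7 :=
  fun k => ∑ i, ∑ j, x i * y j * c i j k

lemma br_add_left (c : Fin 7 → Fin 7 → Fin 7 → ℝ) (x x' y : V7) :
    br c (x + x') y = br c x y + br c x' y := by
  funext k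
  simp only [br, Pi.add_apply, ← Finset.sum_add_distrib]
  exact Finset.sum_congr rfl fun i _ => Finset.sum_congr rfl fun j _ => by ring

lemma br_smul_left (c : Fin 7 → Fin 7 → Fin 7 → ℝ) (r : ℝ) (x y : V7) :
    br c (r • x) y = r • br c x y := by
  funext k
  simp only [br, Pi.smul_apply, smul_eq_mul, Finset.mul_sum]
  exact Finset.sum_congr rfl fun i _ => Finset.sum_congr rfl fun j _ => by ring

lemma br_add_right (c : Fin 7 → Fin 7 → Fin 7 → ℝ) (x y y' : V7) :
    br c x (y + y') = br c x y + br c x y' := by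
  funext k
  simp only [br, Pi.add_apply, ← Finset.sum_add_distrib]
  exact Finset.sum_congr rfl fun i _ => Finset.sum_congr rfl fun j _ => by ring

lemma br_smul_right (c : Fin 7 → Fin 7 → Fin 7 → ℝ) (r : ℝ) (x y : V7) :
    br c x (r • y) = r • br c x y := by
  funext k
  simp only [br, Pi.smul_apply, smul_eq_mul, Finset.mul_sum]
  exact Finset.sum_congr rfl fun i _ => Finset.sum_congr rfl fun j _ => by ring

lemma br_zero_left (c : Fin 7 → Fin 7 → Fin 7 → ℝ) (y : V7) : br c 0 y = 0 := by
  funext k; simp [br]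

lemma br_zero_right (c : Fin 7 → Fin 7 → Fin 7 → ℝ) (x : V7) : br c x 0 = 0 := by
  funext k; simp [br]

/-- The space of derivations of the algebra `(ℝ⁷, br c)`, i.e. the linear maps `D` with
`D (μ x y) = μ (D x) y + μ x (D y)` for all `x, y`, as a submodule of the endomorphisms. -/
def derivations (c : Fin 7 → Fin 7 → Fin 7 → ℝ) : Submodule ℝ (Module.End ℝ V7) where
  carrier := {D | ∀ x y, D (br c x y) = br c (D x) y + br c x (D y)}
  add_mem' := by
    intro D E hD hE x y
    simp only [LinearMap.add_apply, hD x y, hE x y, br_add_left, br_add_right]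
    abel
  zero_mem' := by
    intro x y
    simp [br_zero_left, br_zero_right]
  smul_mem' := by
    intro r D hD x y
    simp only [LinearMap.smul_apply, hD x y, smul_add, br_smul_left, br_smul_right]

/-- The Jacobi identity for the bracket `br c`. -/
def Jacobi (c : Fin 7 → Fin 7 → Fin 7 → ℝ) : Prop :=
  ∀ x y z : V7, br c (br c x y) z + br c (br c y z) x + br c (br c z x) y = 0

/-- Skew-symmetry of the bracket `br c`. -/
def Skew (c : Fin 7 → Fin 7 → Fin 7 → ℝ) : Prop :=
  ∀ x y : V7, br c x y = - br c y x

/-- The diagonal endomorphism `diag (a 1, …, a 7)` of `ℝ⁷`, `e i ↦ a i • e i`. -/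
def diagL (a : Fin 7 → ℝ) : Module.End ℝ V7 :=
  LinearMap.pi fun i => a i • LinearMap.proj i

/-- Structure constants of the bracket `μ̃`. -/
def c11 : Fin 7 → Fin 7 → Fin 7 → ℝ :=
  toC [(0, 1, 3, Real.sqrt 930 / 124),
   (0, 2, 5, Real.sqrt 31 / 31),
   (0, 3, 2, Real.sqrt 341 / 62),
   (0, 3, 4, Real.sqrt 62 / 62),
   (0, 4, 5, Real.sqrt 682 / 124),
   (0, 5, 6, Real.sqrt 341 / 62),
   (1, 2, 6, Real.sqrt 1302 / 124),
   (1, 3, 5, Real.sqrt 1302 / 124)]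

/-! Writing the bracket of `toC L` as a sum of one elementary bracket per entry of `L` gives
skew-symmetry for every `L` and an explicit coordinate formula for `μ̃`. With it the Jacobi
identity, the derivation property of `D` and the values `⟨m x, eₖ⟩` all become polynomial
identities in the coordinates and the square roots. The moment map is diagonal because its only
possible off-diagonal entry, between `e₃` and `e₅` (indices `2` and `4` of `Fin 7`), is a
multiple of `√341 √62 - √31 √682 = 0`. -/

lemma br_toC_nil (x y : V7) : br (toC []) x y = 0 := by
  funext k
  simp [br, toC]

lemma br_toC_cons (i₀ j₀ k₀ : Fin 7) (a : ℝ) (L : List (Fin 7 × Fin 7 × Fin 7 × ℝ)) (x y : V7) :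
    br (toC ((i₀, j₀, k₀, a) :: L)) x y
      = (a * (x i₀ * y j₀ - x j₀ * y i₀)) • e k₀ + br (toC L) x y := by
  funext k
  simp only [br, toC, List.map_cons, List.sum_cons, mul_add, mul_sub, Finset.sum_add_distrib,
    Finset.sum_sub_distrib, Pi.add_apply, Pi.smul_apply, smul_eq_mul, e, Pi.single_apply]
  by_cases hk : k₀ = k
  · subst hk
    simp [mul_ite, ite_and, Finset.sum_ite_eq]
    ring
  · simp [hk, Ne.symm hk]

theorem skew_toC (L : List (Fin 7 × Fin 7 × Fin 7 × ℝ)) : Skew (toC L) := by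
  induction L with
  | nil => intro x y; simp [br_toC_nil]
  | cons t L ih =>
    obtain ⟨i, j, k, a⟩ := t
    intro x y
    rw [br_toC_cons, br_toC_cons, ih x y]
    module

lemma sqrt_62_eq : √62 = √2 * √31 := by
  rw [← Real.sqrt_mul (by norm_num)]
  norm_num

lemma sqrt_682_eq : √682 = √2 * √341 := by
  rw [← Real.sqrt_mul (by norm_num)]
  norm_num

lemma br_c11 (x y : V7) : br c11 x y =
    ![0, 0, √341 / 62 * (x 0 * y 3 - x 3 * y 0),
      √930 / 124 * (x 0 * y 1 - x 1 * y 0),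
      √62 / 62 * (x 0 * y 3 - x 3 * y 0),
      √31 / 31 * (x 0 * y 2 - x 2 * y 0) + √682 / 124 * (x 0 * y 4 - x 4 * y 0)
        + √1302 / 124 * (x 1 * y 3 - x 3 * y 1),
      √341 / 62 * (x 0 * y 5 - x 5 * y 0) + √1302 / 124 * (x 1 * y 2 - x 2 * y 1)] := by
  simp only [c11, br_toC_cons, br_toC_nil]
  funext k
  fin_cases k <;> simp [e, add_assoc]

theorem jacobi_c11 : Jacobi c11 := by
  intro x y z
  simp only [br_c11]
  funext k
  fin_cases k <;> simp <;> ring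

lemma diagL_apply (a x : V7) (k : Fin 7) : diagL a x k = a k * x k := rfl

theorem diagL_mem_derivations_c11 : diagL ![1, 2, 4, 3, 4, 5, 6] ∈ derivations c11 := by
  intro x y
  simp only [br_c11]
  funext k
  fin_cases k <;> simp [diagL_apply] <;> ring

lemma dot_e_right (x : V7) (k : Fin 7) : dot x (e k) = x k := by
  simp [dot, e, Pi.single_apply]

/-- The bilinear form `⟨m(μ) x, y⟩` of the unnormalized moment map of `br c`. -/
def momentForm (c : Fin 7 → Fin 7 → Fin 7 → ℝ) (x y : V7) : ℝ :=
  -2 * ∑ i, ∑ j, dot (br c x (e i)) (e j) * dot (br c y (e i)) (e j)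
    + ∑ i, ∑ j, dot (br c (e i) (e j)) x * dot (br c (e i) (e j)) y

theorem momentForm_c11_e_right (x : V7) (k : Fin 7) :
    momentForm c11 x (e k)
      = (![-41/62, -57/124, -7/124, -8/31, -7/124, 9/62, 43/124] : V7) k * x k := by
  simp only [momentForm, dot_e_right]
  simp only [br_c11, dot, Fin.sum_univ_seven, sqrt_62_eq, sqrt_682_eq]
  fin_cases k <;> simp [e] <;> ring_nf <;> norm_num <;> ring

theorem smul_one_add_smul_diagL_eq : (-(107/124) : ℝ) • (1 : Module.End ℝ V7)
    + (25/124 : ℝ) • diagL ![1, 2, 4, 3, 4, 5, 6]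
      = diagL ![-41/62, -57/124, -7/124, -8/31, -7/124, 9/62, 43/124] := by
  refine LinearMap.ext fun x => funext fun k => ?_
  fin_cases k <;> simp [diagL_apply] <;> ring

/-- The bracket satisfies the Jacobi identity (and is skew-symmetric),
`D` is a derivation of it, and the unnormalized moment map `m(μ̃)` — i.e. the endomorphism
`m` of `ℝ⁷` determined by
`⟨m x, y⟩ = -2 ∑ᵢⱼ ⟨μ̃(x,eᵢ),eⱼ⟩⟨μ̃(y,eᵢ),eⱼ⟩ + ∑ᵢⱼ ⟨μ̃(eᵢ,eⱼ),x⟩⟨μ̃(eᵢ,eⱼ),y⟩` —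
equals `-(107/124) • Id + 25/124 • D`, which is the indicated diagonal map. -/
theorem stmt :
    Skew c11 ∧ Jacobi c11 ∧
    diagL ![1, 2, 4, 3, 4, 5, 6] ∈ derivations c11 ∧
    ∀ m : Module.End ℝ V7,
      (∀ x y : V7, dot (m x) y =
          -2 * ∑ i, ∑ j, dot (br c11 x (e i)) (e j) * dot (br c11 y (e i)) (e j)
          + ∑ i, ∑ j, dot (br c11 (e i) (e j)) x * dot (br c11 (e i) (e j)) y) →
      m = (-(107/124) : ℝ) • (1 : Module.End ℝ V7) + (25/124 : ℝ) • diagL ![1, 2, 4, 3, 4, 5, 6]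
      ∧ m = diagL ![-41/62, -57/124, -7/124, -8/31, -7/124, 9/62, 43/124] := by
  refine ⟨skew_toC _, jacobi_c11, diagL_mem_derivations_c11, fun m hm => ?_⟩
  have hm_diag : m = diagL ![-41/62, -57/124, -7/124, -8/31, -7/124, 9/62, 43/124] :=
    LinearMap.ext fun x => funext fun k => by
      rw [← dot_e_right (m x), diagL_apply]
      exact (hm x (e k)).trans (momentForm_c11_e_right x k)
  exact ⟨hm_diag.trans smul_one_add_smul_diagL_eq.symm, hm_diag⟩
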